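/- For all natural numbers p and q, D(p+1, q+1) = 2·D(p, q). (Consequently the Arf invariants of the quadratic forms q_{p+1,q+1} and q_{p,q} over the field of two elements coincide.) -/

import Mathlib

/-- The quadratic form `q_{p,q}` over the field of two elements on `Fin (p+q) → ZMod 2`:
`q_{p,q}(x) = ∑_{q ≤ i} x i + ∑_{i < j} x i * x j`. -/
def qpq (p q : ℕ) (x : Fin (p + q) → ZMod 2) : ZMod 2 :=
  (∑ i : Fin (p + q), if q ≤ (i : ℕ) then x i else 0) +
    ∑ i : Fin (p + q), ∑ j : Fin (p + q), if (i : ℕ) < (j : ℕ) then x i * x j else 0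

/-- `D(p,q)` is the number of vectors on which `q_{p,q}` vanishes minus the number of
vectors on which it takes the value `1`. -/
def D (p q : ℕ) : ℤ :=
  ((Finset.univ.filter fun x : Fin (p + q) → ZMod 2 => qpq p q x = 0).card : ℤ) -
    ((Finset.univ.filter fun x : Fin (p + q) → ZMod 2 => qpq p q x = 1).card : ℤ)


/-!
Split a vector of length `p + q + 2` as `(u, x, v)`, with `u` the first and `v` the last
coordinate. Then `q_{p+1,q+1}(u, x, v) = q_{p,q}(x) + v + s v + u (s + v)` with `s = ∑ i, x i`.
With the sign character `(-1)^z`, the sum over `u` kills every term with `v ≠ s`, and for `v = s`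
the correction `s + s² = 0` vanishes, so each `x` contributes `2 (-1)^{q_{p,q}(x)}`.
-/

open Finset

/-- Unlike in `qpq`, the dimension is a free parameter, so `p + 1 + (q + 1)` can be rewritten
to `p + q + 2` without casting vectors. -/
def quadForm (n k : ℕ) (x : Fin n → ZMod 2) : ZMod 2 :=
  (∑ i : Fin n, if k ≤ (i : ℕ) then x i else 0) +
    ∑ i : Fin n, ∑ j : Fin n, if (i : ℕ) < (j : ℕ) then x i * x j else 0

theorem qpq_eq_quadForm (p q : ℕ) : qpq p q = quadForm (p + q) q := rfl

theorem quadForm_cons (n k : ℕ) (u : ZMod 2) (x : Fin n → ZMod 2) :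
    quadForm (n + 1) (k + 1) (Fin.cons u x) = quadForm n k x + u * ∑ i, x i := by
  simp only [quadForm, Order.add_one_le_iff, Fin.sum_univ_succ, Fin.coe_ofNat_eq_mod,
    Nat.zero_mod, not_lt_zero, ↓reduceIte, Fin.val_succ, Order.lt_add_one_iff, Fin.cons_succ,
    zero_add, Fin.val_fin_lt, Fin.succ_pos, Fin.cons_zero, Fin.succ_lt_succ_iff, mul_sum]
  ring

theorem quadForm_snoc {n k : ℕ} (hk : k ≤ n) (v : ZMod 2) (x : Fin n → ZMod 2) :
    quadForm (n + 1) k (Fin.snoc x v) = quadForm n k x + v + (∑ i, x i) * v := by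
  simp only [quadForm, Fin.sum_univ_castSucc, Fin.val_castSucc, Fin.snoc_castSucc, Fin.val_last,
    hk, ↓reduceIte, Fin.snoc_last, Fin.val_fin_lt, sum_add_distrib, Fin.castSucc_lt_castSucc_iff,
    fun i : Fin n => (Fin.castSucc_lt_last i).not_gt, sum_const_zero, add_zero,
    Fin.castSucc_lt_last, lt_self_iff_false, sum_mul]
  ring

theorem quadForm_cons_snoc {n k : ℕ} (hk : k ≤ n) (u v : ZMod 2) (x : Fin n → ZMod 2) :
    quadForm (n + 2) (k + 1) (Fin.cons u (Fin.snoc x v)) =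
      quadForm n k x + (v + (∑ i, x i) * v + u * ((∑ i, x i) + v)) := by
  rw [quadForm_cons, quadForm_snoc hk, Fin.sum_univ_castSucc]
  simp only [Fin.snoc_castSucc, Fin.snoc_last]
  ring

def toSign (z : ZMod 2) : ℤ := if z = 0 then 1 else -1

theorem card_filter_eq_zero_sub_card_filter_eq_one {α : Type*} [Fintype α] (f : α → ZMod 2) :
    (#{a | f a = 0} : ℤ) - #{a | f a = 1} = ∑ a, toSign (f a) := by
  simp only [card_filter, Nat.cast_sum, Nat.cast_ite, Nat.cast_one, Nat.cast_zero,
    ← sum_sub_distrib]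
  refine sum_congr rfl fun a _ => ?_
  generalize f a = z
  revert z
  decide

theorem Fin.sum_tuple_cons {M α : Type*} [AddCommMonoid M] [Fintype α] {n : ℕ}
    (f : (Fin (n + 1) → α) → M) : ∑ y, f y = ∑ u, ∑ x, f (Fin.cons u x) := by
  rw [← (Fin.consEquiv fun _ => α).sum_comp, Fintype.sum_prod_type]
  rfl

theorem Fin.sum_tuple_snoc {M α : Type*} [AddCommMonoid M] [Fintype α] {n : ℕ}
    (f : (Fin (n + 1) → α) → M) : ∑ y, f y = ∑ v, ∑ x, f (Fin.snoc x v) := by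
  rw [← (Fin.snocEquiv fun _ => α).sum_comp, Fintype.sum_prod_type]
  rfl

theorem sum_sum_toSign (a s : ZMod 2) :
    ∑ u : ZMod 2, ∑ v : ZMod 2, toSign (a + (v + s * v + u * (s + v))) = 2 * toSign a := by
  revert a s
  decide

theorem sum_toSign_quadForm_add_two {n k : ℕ} (hk : k ≤ n) :
    ∑ y, toSign (quadForm (n + 2) (k + 1) y) = 2 * ∑ x, toSign (quadForm n k x) := by
  simp only [Fin.sum_tuple_cons fun y => toSign (quadForm (n + 2) (k + 1) y),
    Fin.sum_tuple_snoc, quadForm_cons_snoc hk]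
  rw [sum_comm_cycle, mul_sum]
  simp only [sum_sum_toSign]

theorem D_succ_succ (p q : ℕ) : D (p + 1) (q + 1) = 2 * D p q := by
  rw [D, D, card_filter_eq_zero_sub_card_filter_eq_one, card_filter_eq_zero_sub_card_filter_eq_one,
    qpq_eq_quadForm, qpq_eq_quadForm, show p + 1 + (q + 1) = p + q + 2 by omega]
  exact sum_toSign_quadForm_add_two (Nat.le_add_left q p)
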